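/- At any fixed point β* = (λ, λ+b) of the two-dimensional SUCPA map, the Jacobian matrix equals [[1+α_1'(b), -α_1'(b)], [1+e^b α_2'(b), -e^b α_2'(b)]] and is independent of λ. -/

import Mathlib

open Real Finset Filter

/-- Auxiliary function `α₁(x) = (1/N₁) Σ_i p_i / (p_i + q_i e^x)`. -/
noncomputable def alpha1 {N : ℕ} (N1 : ℕ) (p q : Fin N → ℝ) (x : ℝ) : ℝ :=
  (1 / (N1 : ℝ)) * ∑ i, p i / (p i + q i * Real.exp x)

/-- Auxiliary function `α₂(x) = (1/N₂) Σ_i q_i / (p_i + q_i e^x)`. -/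
noncomputable def alpha2 {N : ℕ} (N2 : ℕ) (p q : Fin N → ℝ) (x : ℝ) : ℝ :=
  (1 / (N2 : ℝ)) * ∑ i, q i / (p i + q i * Real.exp x)

/-- The two-dimensional SUCPA map. -/
noncomputable def sucpa2 {N : ℕ} (N1 N2 : ℕ) (p q : Fin N → ℝ)
    (β : Fin 2 → ℝ) : Fin 2 → ℝ :=
  ![-Real.log ((1 / (N1 : ℝ)) *
      ∑ i, p i / (p i * Real.exp (β 0) + q i * Real.exp (β 1))),
    -Real.log ((1 / (N2 : ℝ)) *
      ∑ i, q i / (p i * Real.exp (β 0) + q i * Real.exp (β 1)))]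

/-- The Jacobian matrix at a fixed point, expressed via the derivatives of `α₁, α₂` at `b`:
`[[1+α₁'(b), -α₁'(b)], [1+e^b α₂'(b), -e^b α₂'(b)]]`. It does not depend on `λ`. -/
noncomputable def Jb {N : ℕ} (N1 N2 : ℕ) (p q : Fin N → ℝ) (b : ℝ) :
    Matrix (Fin 2) (Fin 2) ℝ :=
  !![1 + deriv (alpha1 N1 p q) b, -(deriv (alpha1 N1 p q) b);
     1 + Real.exp b * deriv (alpha2 N2 p q) b, -(Real.exp b * deriv (alpha2 N2 p q) b)]

/-! Factoring `p i * exp β₀ + q i * exp β₁ = exp β₀ * (p i + q i * exp (β₁ - β₀))` shows that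
the SUCPA map is `β ↦ (β₀ - log α₁(β₁ - β₀), β₀ - log α₂(β₁ - β₀))`, so the chain rule gives rows
`(1 + α'/α, -α'/α)` evaluated at `b = β₁ - β₀`, whatever `λ` is. At the fixed point `α₁(b) = 1`,
and the identity `N₁ α₁(x) + N₂ eˣ α₂(x) = N` then forces `α₂(b) = e⁻ᵇ`. -/

lemma div_mul_exp_add_mul_exp (r p q a c : ℝ) :
    r / (p * exp a + q * exp c) = exp (-a) * (r / (p + q * exp (c - a))) := by
  rw [show p * exp a + q * exp c = exp a * (p + q * exp (c - a)) by
    rw [exp_sub]; field_simp, exp_neg, ← div_eq_inv_mul, div_div, mul_comm]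

section Alpha

variable {N : ℕ} (p q : Fin N → ℝ)

lemma alpha1_pos {N1 : ℕ} (hN1 : 0 < N1) (hN : 0 < N) (hp : ∀ i, 0 < p i)
    (hq : ∀ i, 0 ≤ q i) (x : ℝ) : 0 < alpha1 N1 p q x :=
  mul_pos (by positivity) <| Finset.sum_pos
    (fun i _ => div_pos (hp i) (add_pos_of_pos_of_nonneg (hp i) (mul_nonneg (hq i) (exp_pos x).le)))
    ⟨⟨0, hN⟩, mem_univ _⟩

lemma alpha2_pos {N2 : ℕ} (hN2 : 0 < N2) (hN : 0 < N) (hp : ∀ i, 0 ≤ p i)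
    (hq : ∀ i, 0 < q i) (x : ℝ) : 0 < alpha2 N2 p q x :=
  mul_pos (by positivity) <| Finset.sum_pos
    (fun i _ => div_pos (hq i) (add_pos_of_nonneg_of_pos (hp i) (mul_pos (hq i) (exp_pos x))))
    ⟨⟨0, hN⟩, mem_univ _⟩

lemma differentiableAt_alpha1 (N1 : ℕ) {x : ℝ} (hx : ∀ i, p i + q i * exp x ≠ 0) :
    DifferentiableAt ℝ (alpha1 N1 p q) x := by
  unfold alpha1
  fun_prop (disch := exact hx _)

lemma differentiableAt_alpha2 (N2 : ℕ) {x : ℝ} (hx : ∀ i, p i + q i * exp x ≠ 0) :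
    DifferentiableAt ℝ (alpha2 N2 p q) x := by
  unfold alpha2
  fun_prop (disch := exact hx _)

lemma natCast_mul_alpha1_add_natCast_mul_exp_mul_alpha2 {N1 N2 : ℕ} (hN1 : N1 ≠ 0)
    (hN2 : N2 ≠ 0) {x : ℝ} (hx : ∀ i, p i + q i * exp x ≠ 0) :
    N1 * alpha1 N1 p q x + N2 * (exp x * alpha2 N2 p q x) = N := by
  calc N1 * alpha1 N1 p q x + N2 * (exp x * alpha2 N2 p q x)
      = ∑ i, (p i + q i * exp x) / (p i + q i * exp x) := by
        simp only [alpha1, alpha2]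
        field_simp
        rw [mul_sum, ← sum_add_distrib]
        exact sum_congr rfl fun i _ => by ring
    _ = N := by simp [div_self (hx _)]

lemma alpha2_eq_exp_neg_of_alpha1_eq_one {N1 N2 : ℕ} (hN1 : N1 ≠ 0) (hN2 : N2 ≠ 0)
    (hN : N1 + N2 = N) {x : ℝ} (hx : ∀ i, p i + q i * exp x ≠ 0)
    (h1 : alpha1 N1 p q x = 1) : alpha2 N2 p q x = exp (-x) := by
  have h := natCast_mul_alpha1_add_natCast_mul_exp_mul_alpha2 p q hN1 hN2 hx
  rw [h1, show (N : ℝ) = N1 + N2 by rw [← hN, Nat.cast_add], mul_one, add_right_inj,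
    mul_eq_left₀ (Nat.cast_ne_zero.2 hN2)] at h
  rw [exp_neg, eq_inv_of_mul_eq_one_right h]

end Alpha

lemma sucpa2_eq_sub_log {N : ℕ} (N1 N2 : ℕ) (p q : Fin N → ℝ)
    (h1 : ∀ x, alpha1 N1 p q x ≠ 0) (h2 : ∀ x, alpha2 N2 p q x ≠ 0) :
    sucpa2 N1 N2 p q = fun β => ![β 0 - log (alpha1 N1 p q (β 1 - β 0)),
      β 0 - log (alpha2 N2 p q (β 1 - β 0))] := by
  funext β
  have shift (M : ℕ) (r : Fin N → ℝ) :
      (1 / (M : ℝ)) * ∑ i, r i / (p i * exp (β 0) + q i * exp (β 1))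
        = exp (-β 0) * ((1 / (M : ℝ)) * ∑ i, r i / (p i + q i * exp (β 1 - β 0))) := by
    simp only [div_mul_exp_add_mul_exp, ← mul_sum]
    ring
  rw [sucpa2, shift, shift, ← alpha1, ← alpha2, log_mul (exp_ne_zero _) (h1 _),
    log_mul (exp_ne_zero _) (h2 _), log_exp]
  ring_nf

lemma hasFDerivAt_sub_log_comp_sub {f : ℝ → ℝ} {f' x : ℝ} {β : Fin 2 → ℝ}
    (hβ : β 1 - β 0 = x) (hf : HasDerivAt f f' x) (hfx : f x ≠ 0) :
    HasFDerivAt (fun β : Fin 2 → ℝ => β 0 - log (f (β 1 - β 0)))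
      ((1 + f' / f x) • ContinuousLinearMap.proj (0 : Fin 2)
        + (-(f' / f x)) • ContinuousLinearMap.proj (1 : Fin 2) : (Fin 2 → ℝ) →L[ℝ] ℝ) β := by
  have hdiff : HasFDerivAt (fun β : Fin 2 → ℝ => β 1 - β 0)
      (ContinuousLinearMap.proj (1 : Fin 2) - ContinuousLinearMap.proj (0 : Fin 2) :
        (Fin 2 → ℝ) →L[ℝ] ℝ) β :=
    (hasFDerivAt_apply (𝕜 := ℝ) 1 β).fun_sub (hasFDerivAt_apply (𝕜 := ℝ) 0 β)
  have := (hasFDerivAt_apply (𝕜 := ℝ) 0 β).fun_sub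
    ((hf.log hfx).comp_hasFDerivAt_of_eq β hdiff hβ.symm)
  refine this.congr_fderiv ?_
  ext v
  simp only [sub_apply, add_apply, smul_apply, ContinuousLinearMap.proj_apply, smul_eq_mul]
  ring

lemma proj_comp_toContinuousLinearMap_toLin' {𝕜 : Type*} [NontriviallyNormedField 𝕜]
    [CompleteSpace 𝕜] {m n : ℕ} (A : Matrix (Fin m) (Fin n) 𝕜) (i : Fin m) :
    (ContinuousLinearMap.proj i).comp (LinearMap.toContinuousLinearMap (Matrix.toLin' A))
      = ∑ j, A i j • ContinuousLinearMap.proj j := by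
  ext v
  simp [Matrix.mulVec, dotProduct]

theorem sucpa2_jacobian_at_fixed_point_general {N : ℕ} (N1 N2 : ℕ) (hN1 : 0 < N1) (hN2 : 0 < N2)
    (hN : N1 + N2 = N) (p q : Fin N → ℝ) (hp : ∀ i, 0 < p i) (hq : ∀ i, 0 < q i)
    (b : ℝ) (hb : alpha1 N1 p q b = 1) (lam : ℝ) :
    HasFDerivAt (sucpa2 N1 N2 p q)
      (LinearMap.toContinuousLinearMap (Matrix.toLin' (Jb N1 N2 p q b)))
      ![lam, lam + b] := by
  have hden (x : ℝ) (i : Fin N) : p i + q i * exp x ≠ 0 :=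
    (add_pos (hp i) (mul_pos (hq i) (exp_pos x))).ne'
  have hNpos : 0 < N := hN ▸ Nat.add_pos_left hN1 N2
  have hα1 (x : ℝ) : alpha1 N1 p q x ≠ 0 :=
    (alpha1_pos p q hN1 hNpos hp (fun i => (hq i).le) x).ne'
  have hα2 (x : ℝ) : alpha2 N2 p q x ≠ 0 :=
    (alpha2_pos p q hN2 hNpos (fun i => (hp i).le) hq x).ne'
  have hα2b : alpha2 N2 p q b = exp (-b) :=
    alpha2_eq_exp_neg_of_alpha1_eq_one p q hN1.ne' hN2.ne' hN (hden b) hb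
  have hβ : ![lam, lam + b] 1 - ![lam, lam + b] 0 = b := by simp
  rw [sucpa2_eq_sub_log N1 N2 p q hα1 hα2]
  refine hasFDerivAt_pi'' fun i => ?_
  rw [proj_comp_toContinuousLinearMap_toLin', Fin.sum_univ_two]
  fin_cases i
  · simpa [Jb, hb] using hasFDerivAt_sub_log_comp_sub hβ
      (differentiableAt_alpha1 p q N1 (hden b)).hasDerivAt (hα1 b)
  · simpa [Jb, hα2b, exp_neg, div_eq_mul_inv, mul_comm] using hasFDerivAt_sub_log_comp_sub hβ
      (differentiableAt_alpha2 p q N2 (hden b)).hasDerivAt (hα2 b)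

theorem sucpa2_jacobian_at_fixed_point {N : ℕ} (N1 N2 : ℕ) (hN1 : 0 < N1) (hN2 : 0 < N2)
    (hN : N1 + N2 = N) (p q : Fin N → ℝ) (hp : ∀ i, 0 < p i) (hq : ∀ i, 0 < q i)
    (hpq : ∀ i, p i + q i = 1) (b : ℝ) (hb : alpha1 N1 p q b = 1) (lam : ℝ) :
    HasFDerivAt (sucpa2 N1 N2 p q)
      (LinearMap.toContinuousLinearMap (Matrix.toLin' (Jb N1 N2 p q b)))
      ![lam, lam + b] :=
  sucpa2_jacobian_at_fixed_point_general N1 N2 hN1 hN2 hN p q hp hq b hb lam
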